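/- Let n ≥ 0 and let p ∈ ℝ^({0,1}^n) satisfy Σ_x p_x > 0. Then ‖Fix(p) − p‖₁ = 2 · Σ_{x : p_x < 0} |p_x|, where ‖v‖₁ = Σ_x |v_x|. -/
import Mathlib


open Finset

noncomputable section

/-- The recursive procedure `Fix` on vectors `p ∈ ℝ^({0,1}^n)` (only meaningful when
`Σ p > 0`). -/
def fixVec : (n : ℕ) → ((Fin n → Bool) → ℝ) → ((Fin n → Bool) → ℝ)
  | 0, p => p
  | n + 1, p =>
    let a : (Fin n → Bool) → ℝ := fun x => p (Fin.cons false x)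
    let b : (Fin n → Bool) → ℝ := fun x => p (Fin.cons true x)
    let Sa := ∑ x : Fin n → Bool, a x
    let Sb := ∑ x : Fin n → Bool, b x
    let Sp := ∑ x : Fin (n + 1) → Bool, p x
    fun x =>
      if 0 < Sa ∧ 0 < Sb then
        (if x 0 = false then fixVec n a (Fin.tail x) else fixVec n b (Fin.tail x))
      else if 0 < Sa then
        (if x 0 = false then (Sp / Sa) * fixVec n a (Fin.tail x) else 0)
      else
        (if x 0 = true then (Sp / Sb) * fixVec n b (Fin.tail x) else 0)

lemma sum_split (n : ℕ) (f : (Fin (n+1) → Bool) → ℝ) :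
    ∑ x : Fin (n+1) → Bool, f x
      = (∑ y : Fin n → Bool, f (Fin.cons false y)) + ∑ y : Fin n → Bool, f (Fin.cons true y) := by
  rw [← ((Fin.consEquiv (fun _ => Bool)).sum_comp f)]
  simp [Fintype.sum_prod_type, Fintype.sum_bool, Fin.consEquiv, add_comm]

lemma fixVec_succ (n : ℕ) (p : (Fin (n+1) → Bool) → ℝ) (x : Fin (n+1) → Bool) :
    fixVec (n+1) p x =
      if 0 < (∑ y : Fin n → Bool, p (Fin.cons false y)) ∧ 0 < (∑ y : Fin n → Bool, p (Fin.cons true y)) then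
        (if x 0 = false then fixVec n (fun y => p (Fin.cons false y)) (Fin.tail x)
         else fixVec n (fun y => p (Fin.cons true y)) (Fin.tail x))
      else if 0 < (∑ y : Fin n → Bool, p (Fin.cons false y)) then
        (if x 0 = false then
          ((∑ y, p y) / (∑ y : Fin n → Bool, p (Fin.cons false y))) *
            fixVec n (fun y => p (Fin.cons false y)) (Fin.tail x) else 0)
      else
        (if x 0 = true then
          ((∑ y, p y) / (∑ y : Fin n → Bool, p (Fin.cons true y))) *
            fixVec n (fun y => p (Fin.cons true y)) (Fin.tail x) else 0) := by
  rfl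

example : True := trivial

lemma sum_fin0 (p : (Fin 0 → Bool) → ℝ) (x : Fin 0 → Bool) :
    ∑ y : Fin 0 → Bool, p y = p x := by
  rw [Fintype.sum_unique]
  congr 1
  exact Subsingleton.elim _ _

lemma fixVec_nonneg : ∀ (n : ℕ) (p : (Fin n → Bool) → ℝ),
    0 < (∑ x : Fin n → Bool, p x) → ∀ x, 0 ≤ fixVec n p x := by
  intro n
  induction n with
  | zero =>
    intro p hp x
    show 0 ≤ p x
    rw [← sum_fin0 p x]; exact hp.le
  | succ n ih =>
    intro p hp x
    have hsplit := sum_split n p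
    rw [fixVec_succ]
    split_ifs with h1 h2 h3 h4 h5
    · exact ih _ h1.1 _
    · exact ih _ h1.2 _
    · exact mul_nonneg (div_nonneg hp.le h3.le) (ih _ h3 _)
    · exact le_refl 0
    · have hSb : 0 < ∑ y : Fin n → Bool, p (Fin.cons true y) := by
        by_contra hb
        push_neg at hb
        push_neg at h3
        nlinarith [hp, hsplit]
      exact mul_nonneg (div_nonneg hp.le hSb.le) (ih _ hSb _)
    · exact le_refl 0

lemma fixVec_zero_of_nonpos : ∀ (n : ℕ) (p : (Fin n → Bool) → ℝ),
    0 < (∑ x : Fin n → Bool, p x) → ∀ x, p x ≤ 0 → fixVec n p x = 0 := by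
  intro n
  induction n with
  | zero =>
    intro p hp x hx
    exfalso
    rw [sum_fin0 p x] at hp
    linarith
  | succ n ih =>
    intro p hp x hx
    rw [fixVec_succ]
    have hx' : p (Fin.cons (x 0) (Fin.tail x)) ≤ 0 := by
      rwa [Fin.cons_self_tail]
    split_ifs with h1 h2 h3 h4 h5
    · rw [ih _ h1.1 _ (by rwa [h2] at hx')]
    · have : x 0 = true := by
        cases h : x 0
        · exact absurd h h2
        · rfl
      rw [ih _ h1.2 _ (by rwa [this] at hx')]
    · rw [ih _ h3 _ (by rwa [h4] at hx'), mul_zero]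
    · rfl
    · have hSb : 0 < ∑ y : Fin n → Bool, p (Fin.cons true y) := by
        by_contra hb
        push_neg at hb
        push_neg at h3
        have hsplit := sum_split n p
        nlinarith [hp]
      rw [ih _ hSb _ (by rwa [h5] at hx'), mul_zero]
    · rfl

lemma fixVec_le : ∀ (n : ℕ) (p : (Fin n → Bool) → ℝ),
    0 < (∑ x : Fin n → Bool, p x) → ∀ x, 0 ≤ p x → fixVec n p x ≤ p x := by
  intro n
  induction n with
  | zero => intro p hp x hx; exact le_refl (p x)
  | succ n ih =>
    intro p hp x hx
    have hpx : p (Fin.cons (x 0) (Fin.tail x)) = p x := by rw [Fin.cons_self_tail]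
    have hsplit := sum_split n p
    rw [fixVec_succ]
    split_ifs with h1 h2 h3 h4 h5
    · rw [← hpx, h2]; exact ih _ h1.1 _ (by rw [h2] at hpx; rw [hpx]; exact hx)
    · have hx0 : x 0 = true := by cases h : x 0; exact absurd h h2; rfl
      rw [← hpx, hx0]; exact ih _ h1.2 _ (by rw [hx0] at hpx; rw [hpx]; exact hx)
    · have hSb : ¬ 0 < ∑ y : Fin n → Bool, p (Fin.cons true y) := fun hb => h1 ⟨h3, hb⟩
      push_neg at hSb
      have hfac : (∑ y, p y) / (∑ y : Fin n → Bool, p (Fin.cons false y)) ≤ 1 := by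
        rw [div_le_one h3]; linarith
      have hfac0 : 0 ≤ (∑ y, p y) / (∑ y : Fin n → Bool, p (Fin.cons false y)) :=
        div_nonneg hp.le h3.le
      have hF0 : 0 ≤ fixVec n (fun y => p (Fin.cons false y)) (Fin.tail x) :=
        fixVec_nonneg _ _ h3 _
      have hF : fixVec n (fun y => p (Fin.cons false y)) (Fin.tail x) ≤ p x := by
        rw [← hpx, h4]
        exact ih _ h3 _ (by rw [h4] at hpx; rw [hpx]; exact hx)
      nlinarith
    · exact hx
    · have hSa : ¬ 0 < ∑ y : Fin n → Bool, p (Fin.cons false y) := h3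
      push_neg at hSa
      have hSb : 0 < ∑ y : Fin n → Bool, p (Fin.cons true y) := by nlinarith
      have hfac : (∑ y, p y) / (∑ y : Fin n → Bool, p (Fin.cons true y)) ≤ 1 := by
        rw [div_le_one hSb]; linarith
      have hfac0 : 0 ≤ (∑ y, p y) / (∑ y : Fin n → Bool, p (Fin.cons true y)) :=
        div_nonneg hp.le hSb.le
      have hF0 : 0 ≤ fixVec n (fun y => p (Fin.cons true y)) (Fin.tail x) :=
        fixVec_nonneg _ _ hSb _
      have hF : fixVec n (fun y => p (Fin.cons true y)) (Fin.tail x) ≤ p x := by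
        rw [← hpx, h5]
        exact ih _ hSb _ (by rw [h5] at hpx; rw [hpx]; exact hx)
      nlinarith
    · exact hx

lemma fixVec_sum : ∀ (n : ℕ) (p : (Fin n → Bool) → ℝ),
    0 < (∑ x : Fin n → Bool, p x) →
    (∑ x : Fin n → Bool, fixVec n p x) = ∑ x : Fin n → Bool, p x := by
  intro n
  induction n with
  | zero => intro p hp; rfl
  | succ n ih =>
    intro p hp
    have hsplit := sum_split n p
    rw [sum_split n (fixVec (n+1) p)]
    simp only [fixVec_succ, Fin.cons_zero, Fin.tail_cons]
    by_cases hA : 0 < ∑ y : Fin n → Bool, p (Fin.cons false y)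
    · by_cases hB : 0 < ∑ y : Fin n → Bool, p (Fin.cons true y)
      · simp only [if_pos (And.intro hA hB), if_pos rfl, if_neg (by simp : ¬(true = false)), if_true]
        rw [ih _ hA, ih _ hB, hsplit]
      · simp only [if_neg (fun h : _ ∧ _ => hB h.2), if_pos hA, if_pos rfl,
          if_neg (by simp : ¬(true = false)), if_true]
        rw [Finset.sum_const_zero, ← Finset.mul_sum, ih _ hA, div_mul_cancel₀ _ hA.ne',
          add_zero]
    · have hB : 0 < ∑ y : Fin n → Bool, p (Fin.cons true y) := by
        push_neg at hA; nlinarith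
      simp only [if_neg (fun h : _ ∧ _ => hA h.1), if_neg hA, if_pos rfl,
        if_neg (by simp : ¬(false = true)), if_true]
      rw [Finset.sum_const_zero, ← Finset.mul_sum, ih _ hB, div_mul_cancel₀ _ hB.ne',
        zero_add]

/-- if `Σ_x p_x > 0` then `‖Fix(p) − p‖₁ = 2·Σ_{x : p_x < 0} |p_x|`. -/
theorem fixVec_dist (n : ℕ) (p : (Fin n → Bool) → ℝ)
    (hp : 0 < ∑ x : Fin n → Bool, p x) :
    ∑ x : Fin n → Bool, |fixVec n p x - p x|
      = 2 * ∑ x ∈ Finset.univ.filter (fun x : Fin n → Bool => p x < 0), |p x| := by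
  classical
  have hzero : ∀ x ∈ Finset.univ.filter (fun x : Fin n → Bool => p x < 0), fixVec n p x = 0 :=
    fun x hx => fixVec_zero_of_nonpos n p hp x (le_of_lt (Finset.mem_filter.mp hx).2)
  rw [← Finset.sum_filter_add_sum_filter_not Finset.univ (fun x => p x < 0)
    (fun x => |fixVec n p x - p x|)]
  have hA : ∑ x ∈ Finset.univ.filter (fun x : Fin n → Bool => p x < 0), |fixVec n p x - p x|
      = ∑ x ∈ Finset.univ.filter (fun x : Fin n → Bool => p x < 0), |p x| :=
    Finset.sum_congr rfl fun x hx => by rw [hzero x hx, zero_sub, abs_neg]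
  have hB : ∑ x ∈ Finset.univ.filter (fun x : Fin n → Bool => ¬ p x < 0), |fixVec n p x - p x|
      = ∑ x ∈ Finset.univ.filter (fun x : Fin n → Bool => ¬ p x < 0), (p x - fixVec n p x) :=
    Finset.sum_congr rfl fun x hx => by
      have hx' : 0 ≤ p x := not_lt.mp (Finset.mem_filter.mp hx).2
      rw [abs_of_nonpos (by linarith [fixVec_le n p hp x hx']), neg_sub]
  have htot : (∑ x ∈ Finset.univ.filter (fun x : Fin n → Bool => p x < 0), (p x - fixVec n p x))
      + ∑ x ∈ Finset.univ.filter (fun x : Fin n → Bool => ¬ p x < 0), (p x - fixVec n p x)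
      = 0 := by
    rw [Finset.sum_filter_add_sum_filter_not, Finset.sum_sub_distrib, fixVec_sum n p hp,
      sub_self]
  have hS : ∑ x ∈ Finset.univ.filter (fun x : Fin n → Bool => p x < 0), (p x - fixVec n p x)
      = - ∑ x ∈ Finset.univ.filter (fun x : Fin n → Bool => p x < 0), |p x| := by
    have h : ∀ x ∈ Finset.univ.filter (fun x : Fin n → Bool => p x < 0),
        p x - fixVec n p x = -|p x| := fun x hx => by
      rw [hzero x hx, sub_zero, abs_of_neg (Finset.mem_filter.mp hx).2, neg_neg]
    rw [Finset.sum_congr rfl h, Finset.sum_neg_distrib]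
  rw [hA, hB]
  linarith [htot, hS]

end
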